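/- The digamma function satisfies ψ(z) = log z − 1/(2z) − ∫₀^∞ ([t] − t + 1/2)/(t + z)² dt for all z with Re z > 0, where [t] denotes the floor of t. -/

import Mathlib

/-!
Put `R z = log z - 1/(2z) - ψ z`. On `[k, k+1]` the sawtooth equals `k + 1/2 - t`, so its integral
against `(t + z)⁻²` is elementary, and the recurrence `ψ (w + 1) = ψ w + 1/w` turns it into
`R (z + k) - R (z + k + 1)`. Telescoping, `∫₀^N = R z - R (z + N)`, so the formula holds as soon as
`R (z + N) → 0`. For real `z > 0` this follows from the convexity of `log Γ`, which squeezes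
`ψ y` between `log (y - 1)` and `log y`. Both sides are holomorphic on the right half-plane, so the
identity theorem extends the formula from the positive reals.
-/

open Complex Real

noncomputable def digamma (z : ℂ) : ℂ := deriv Complex.Gamma z / Complex.Gamma z

open MeasureTheory Set Filter Topology

noncomputable section

def sawtooth (t : ℝ) : ℝ := (⌊t⌋ : ℝ) - t + 1/2

lemma abs_sawtooth_le (t : ℝ) : |sawtooth t| ≤ 1 / 2 := by
  have := Int.sub_one_lt_floor t
  have := Int.floor_le t
  rw [abs_le, sawtooth]
  constructor <;> linarith

lemma sawtooth_add_natCast (t : ℝ) (k : ℕ) : sawtooth (t + k) = sawtooth t := by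
  simp only [sawtooth, Int.floor_add_natCast]
  push_cast
  ring

lemma sawtooth_of_mem_Ico {s : ℝ} (hs : s ∈ Ico (0 : ℝ) 1) : sawtooth s = 1 / 2 - s := by
  rw [sawtooth, Int.floor_eq_zero_iff.mpr hs, Int.cast_zero]
  ring

@[fun_prop]
lemma measurable_sawtooth : Measurable sawtooth := by
  unfold sawtooth
  fun_prop

lemma integrableOn_Ioi_inv_add_sq {c : ℝ} (hc : 0 < c) :
    IntegrableOn (fun t : ℝ => ((t + c) ^ 2)⁻¹) (Ioi 0) := by
  have hderiv (t : ℝ) (ht : t ∈ Ici 0) : HasDerivAt (fun t => -(t + c)⁻¹) ((t + c) ^ 2)⁻¹ t := by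
    have : t + c ≠ 0 := by have : (0 : ℝ) ≤ t := ht; positivity
    have h := (((hasDerivAt_id t).add_const c).inv this).neg
    simp only [id, neg_div, neg_neg, one_div] at h
    exact h
  have hlim : Tendsto (fun t : ℝ => -(t + c)⁻¹) atTop (𝓝 0) := by
    simpa using (tendsto_atTop_add_const_right atTop c tendsto_id).inv_tendsto_atTop.neg
  exact integrableOn_Ioi_deriv_of_nonneg' hderiv (fun t _ => by positivity) hlim

lemma add_re_le_norm_ofReal_add (t : ℝ) (z : ℂ) : t + z.re ≤ ‖(t : ℂ) + z‖ := by
  simpa using re_le_norm ((t : ℂ) + z)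

lemma norm_sawtooth_div_pow_le {z : ℂ} {c t : ℝ} (hc : 0 < c) (hcz : c ≤ z.re) (ht : 0 ≤ t)
    (n : ℕ) : ‖(sawtooth t : ℂ) / ((t : ℂ) + z) ^ n‖ ≤ 1 / 2 * ((t + c) ^ n)⁻¹ := by
  have hle : t + c ≤ ‖(t : ℂ) + z‖ := (by linarith : t + c ≤ t + z.re).trans
    (add_re_le_norm_ofReal_add t z)
  rw [norm_div, norm_pow, norm_real, Real.norm_eq_abs, div_eq_mul_inv]
  gcongr
  exact abs_sawtooth_le t

lemma integrableOn_sawtooth_div_sq {z : ℂ} (hz : 0 < z.re) :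
    IntegrableOn (fun t : ℝ => (sawtooth t : ℂ) / ((t : ℂ) + z) ^ 2) (Ioi 0) := by
  refine ((integrableOn_Ioi_inv_add_sq hz).const_mul (1 / 2)).mono' ?_ ?_
  · exact (by fun_prop : Measurable fun t : ℝ => (sawtooth t : ℂ) / ((t : ℂ) + z) ^ 2)
      |>.aestronglyMeasurable
  · filter_upwards [ae_restrict_mem measurableSet_Ioi] with t ht
    exact norm_sawtooth_div_pow_le hz le_rfl (le_of_lt ht) 2

lemma hasDerivAt_sawtooth_div_sq {z : ℂ} {t : ℝ} (ht : 0 ≤ t) (hz : 0 < z.re) :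
    HasDerivAt (fun w : ℂ => (sawtooth t : ℂ) / ((t : ℂ) + w) ^ 2)
      (-2 * ((sawtooth t : ℂ) / ((t : ℂ) + z) ^ 3)) z := by
  have hne : (t : ℂ) + z ≠ 0 := norm_pos_iff.mp <|
    (by linarith : 0 < t + z.re).trans_le (add_re_le_norm_ofReal_add t z)
  refine ((hasDerivAt_const z (sawtooth t : ℂ)).fun_div
    (((hasDerivAt_id z).const_add (t : ℂ)).fun_pow 2) (pow_ne_zero 2 hne)).congr_deriv ?_
  simp only [id]
  field_simp
  ring

lemma hasDerivAt_integral_sawtooth_div_sq {z₀ : ℂ} (hz₀ : 0 < z₀.re) :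
    HasDerivAt (fun z : ℂ => ∫ t in Ioi (0 : ℝ), (sawtooth t : ℂ) / ((t : ℂ) + z) ^ 2)
      (∫ t in Ioi (0 : ℝ), -2 * ((sawtooth t : ℂ) / ((t : ℂ) + z₀) ^ 3)) z₀ := by
  set ε := z₀.re / 2 with hε_def
  have hε : 0 < ε := by positivity
  have hball {z : ℂ} (hz : z ∈ Metric.ball z₀ ε) : ε ≤ z.re := by
    have := (abs_re_le_norm (z - z₀)).trans_lt (mem_ball_iff_norm.mp hz)
    rw [sub_re, abs_lt] at this
    linarith
  have hbound : ∀ᵐ t ∂volume.restrict (Ioi 0), ∀ z ∈ Metric.ball z₀ ε,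
      ‖-2 * ((sawtooth t : ℂ) / ((t : ℂ) + z) ^ 3)‖ ≤ ε⁻¹ * ((t + ε) ^ 2)⁻¹ := by
    filter_upwards [ae_restrict_mem measurableSet_Ioi] with t (ht : 0 < t) z hz
    have hcube : ε * (t + ε) ^ 2 ≤ (t + ε) ^ 3 := by
      rw [pow_succ]; nlinarith [sq_nonneg (t + ε)]
    calc ‖-2 * ((sawtooth t : ℂ) / ((t : ℂ) + z) ^ 3)‖
        ≤ 2 * (1 / 2 * ((t + ε) ^ 3)⁻¹) := by
          rw [norm_mul, norm_neg, RCLike.norm_ofNat]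
          gcongr
          exact norm_sawtooth_div_pow_le hε (hball hz) ht.le 3
      _ ≤ ε⁻¹ * ((t + ε) ^ 2)⁻¹ := by
          rw [← mul_inv, ← mul_assoc, mul_one_div_cancel two_ne_zero, one_mul]
          exact inv_anti₀ (by positivity) hcube
  refine (hasDerivAt_integral_of_dominated_loc_of_deriv_le (μ := volume.restrict (Ioi 0))
    (F := fun z t => (sawtooth t : ℂ) / ((t : ℂ) + z) ^ 2) (Metric.ball_mem_nhds z₀ hε)
    (.of_forall fun z => ?_) (integrableOn_sawtooth_div_sq hz₀) ?_ hbound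
    ((integrableOn_Ioi_inv_add_sq hε).const_mul ε⁻¹) ?_).2
  · exact (by fun_prop : Measurable fun t : ℝ => (sawtooth t : ℂ) / ((t : ℂ) + z) ^ 2)
      |>.aestronglyMeasurable
  · exact (by fun_prop : Measurable fun t : ℝ => -2 * ((sawtooth t : ℂ) / ((t : ℂ) + z₀) ^ 3))
      |>.aestronglyMeasurable
  · filter_upwards [ae_restrict_mem measurableSet_Ioi] with t (ht : 0 < t) z hz
    exact hasDerivAt_sawtooth_div_sq ht.le (hε.trans_le (hball hz))

lemma intervalIntegrable_sawtooth_div_sq {z : ℂ} (hz : 0 < z.re) {a b : ℝ} (ha : 0 ≤ a)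
    (hb : 0 ≤ b) :
    IntervalIntegrable (fun t : ℝ => (sawtooth t : ℂ) / ((t : ℂ) + z) ^ 2) volume a b :=
  intervalIntegrable_iff.mpr <| (integrableOn_sawtooth_div_sq hz).mono_set fun _ ht =>
    (le_min ha hb).trans_lt ht.1

lemma intervalIntegral_sawtooth_div_sq_zero_one {w : ℂ} (hw : 0 < w.re) :
    ∫ s in (0 : ℝ)..1, (sawtooth s : ℂ) / ((s : ℂ) + w) ^ 2
      = 1 / (2 * w) + 1 / (2 * (w + 1)) - (log (w + 1) - log w) := by
  -- `(1/2 - s) / (s + w)^2 = (1/2 + w) / (s + w)^2 - 1 / (s + w)`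
  set F : ℂ → ℂ := fun u => -(1 / 2 + w) / (u + w) - log (u + w)
  have hslit {s : ℝ} (hs : 0 ≤ s) : (s : ℂ) + w ∈ slitPlane :=
    mem_slitPlane_iff.mpr (Or.inl (by rw [add_re, ofReal_re]; linarith))
  have hF {s : ℝ} (hs : 0 ≤ s) :
      HasDerivAt (fun s : ℝ => F s) ((1 / 2 - s : ℂ) / ((s : ℂ) + w) ^ 2) s := by
    have hlin : HasDerivAt (fun u : ℂ => u + w) 1 (s : ℂ) := (hasDerivAt_id _).add_const w
    refine (((hasDerivAt_const _ (-(1 / 2 + w))).fun_div hlin (slitPlane_ne_zero (hslit hs))).sub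
      (hlin.clog (hslit hs))).comp_ofReal.congr_deriv ?_
    have := slitPlane_ne_zero (hslit hs)
    field_simp
    ring
  rw [intervalIntegral.integral_eq_sub_of_hasDerivAt_of_le zero_le_one
    (fun s hs => (hF hs.1).continuousAt.continuousWithinAt) (fun s hs => ?_)
    (intervalIntegrable_sawtooth_div_sq hw le_rfl zero_le_one)]
  · have h1 : (1 : ℂ) + w ≠ 0 := by simpa using slitPlane_ne_zero (hslit zero_le_one)
    have h0 : w ≠ 0 := by simpa using slitPlane_ne_zero (hslit le_rfl)
    simp only [F, ofReal_one, ofReal_zero, zero_add, add_comm (1 : ℂ) w] at h1 ⊢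
    field_simp
    ring
  · rw [sawtooth_of_mem_Ico (Ioo_subset_Ico_self hs)]
    push_cast
    exact hF hs.1.le

lemma intervalIntegral_sawtooth_div_sq_nat_add_one (z : ℂ) (k : ℕ) :
    ∫ t in (k : ℝ)..(k + 1 : ℕ), (sawtooth t : ℂ) / ((t : ℂ) + z) ^ 2
      = ∫ s in (0 : ℝ)..1, (sawtooth s : ℂ) / ((s : ℂ) + (z + k)) ^ 2 := by
  have := intervalIntegral.integral_comp_add_right
    (fun t : ℝ => (sawtooth t : ℂ) / ((t : ℂ) + z) ^ 2) (k : ℝ) (a := 0) (b := 1)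
  simp only [sawtooth_add_natCast, zero_add, ofReal_add, ofReal_natCast] at this
  rw [Nat.cast_succ, add_comm (k : ℝ), ← this]
  simp only [add_assoc, add_comm (k : ℂ)]

lemma ne_neg_natCast_of_re_pos {w : ℂ} (hw : 0 < w.re) (m : ℕ) : w ≠ -m := by
  rintro rfl
  rw [neg_re, natCast_re, Left.neg_pos_iff] at hw
  exact absurd hw (not_lt.mpr m.cast_nonneg)

def digammaRemainder (z : ℂ) : ℂ := log z - 1 / (2 * z) - Complex.digamma z

lemma digammaRemainder_sub_digammaRemainder_add_one {w : ℂ} (hw : 0 < w.re) :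
    digammaRemainder w - digammaRemainder (w + 1)
      = 1 / (2 * w) + 1 / (2 * (w + 1)) - (log (w + 1) - log w) := by
  have h0 : w ≠ 0 := by simpa using ne_neg_natCast_of_re_pos hw 0
  have h1 : w + 1 ≠ 0 := by simpa [eq_neg_iff_add_eq_zero] using ne_neg_natCast_of_re_pos hw 1
  rw [digammaRemainder, digammaRemainder, digamma_apply_add_one w (ne_neg_natCast_of_re_pos hw)]
  field_simp
  ring

lemma intervalIntegral_sawtooth_div_sq_zero_nat {z : ℂ} (hz : 0 < z.re) (N : ℕ) :
    ∫ t in (0 : ℝ)..N, (sawtooth t : ℂ) / ((t : ℂ) + z) ^ 2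
      = digammaRemainder z - digammaRemainder (z + N) := by
  have hunit (k : ℕ) : ∫ t in (k : ℝ)..(k + 1 : ℕ), (sawtooth t : ℂ) / ((t : ℂ) + z) ^ 2
      = digammaRemainder (z + k) - digammaRemainder (z + (k + 1 : ℕ)) := by
    have hzk : 0 < (z + k).re := by rw [add_re, natCast_re]; positivity
    rw [intervalIntegral_sawtooth_div_sq_nat_add_one, intervalIntegral_sawtooth_div_sq_zero_one hzk,
      Nat.cast_succ, ← add_assoc, digammaRemainder_sub_digammaRemainder_add_one hzk]
  rw [← Nat.cast_zero, ← intervalIntegral.sum_integral_adjacent_intervals fun k _ =>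
    intervalIntegrable_sawtooth_div_sq hz k.cast_nonneg (k + 1).cast_nonneg]
  simp only [hunit, Finset.sum_range_sub', Nat.cast_zero, add_zero]

lemma integral_sawtooth_div_sq_of_tendsto {z : ℂ} (hz : 0 < z.re)
    (h : Tendsto (fun N : ℕ => digammaRemainder (z + N)) atTop (𝓝 0)) :
    ∫ t in Ioi (0 : ℝ), (sawtooth t : ℂ) / ((t : ℂ) + z) ^ 2 = digammaRemainder z := by
  refine tendsto_nhds_unique (intervalIntegral_tendsto_integral_Ioi 0
    (integrableOn_sawtooth_div_sq hz) tendsto_natCast_atTop_atTop) ?_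
  simpa [intervalIntegral_sawtooth_div_sq_zero_nat hz] using
    (tendsto_const_nhds (x := digammaRemainder z)).sub h

namespace Real

lemma log_Gamma_add_one {y : ℝ} (hy : 0 < y) :
    log (Real.Gamma (y + 1)) = log (Real.Gamma y) + log y := by
  rw [Real.Gamma_add_one hy.ne', log_mul hy.ne' (Real.Gamma_pos_of_pos hy).ne', add_comm]

lemma differentiableAt_Gamma_of_pos {y : ℝ} (hy : 0 < y) : DifferentiableAt ℝ Real.Gamma y :=
  differentiableOn_Gamma_Ioi.differentiableAt (Ioi_mem_nhds hy)

lemma differentiableAt_log_Gamma {y : ℝ} (hy : 0 < y) :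
    DifferentiableAt ℝ (log ∘ Real.Gamma) y :=
  (differentiableAt_Gamma_of_pos hy).log (Real.Gamma_pos_of_pos hy).ne'

lemma deriv_log_Gamma_le_log {y : ℝ} (hy : 0 < y) : deriv (log ∘ Real.Gamma) y ≤ log y := by
  have := convexOn_log_Gamma.deriv_le_slope hy (mem_Ioi.mpr (by linarith))
    (lt_add_one y) (differentiableAt_log_Gamma hy)
  rwa [slope_def_field, add_sub_cancel_left, div_one, Function.comp_apply, Function.comp_apply,
    log_Gamma_add_one hy, add_sub_cancel_left] at this

lemma log_sub_one_le_deriv_log_Gamma {y : ℝ} (hy : 1 < y) :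
    log (y - 1) ≤ deriv (log ∘ Real.Gamma) y := by
  have hy' : 0 < y - 1 := by linarith
  have := convexOn_log_Gamma.slope_le_deriv hy' (mem_Ioi.mpr (by linarith))
    (sub_one_lt y) (differentiableAt_log_Gamma (by linarith))
  have hrec := log_Gamma_add_one hy'
  rw [sub_add_cancel] at hrec
  rwa [slope_def_field, sub_sub_cancel, div_one, Function.comp_apply, Function.comp_apply, hrec,
    add_sub_cancel_left] at this

lemma tendsto_deriv_log_Gamma_sub_log :
    Tendsto (fun y => deriv (log ∘ Real.Gamma) y - log y) atTop (𝓝 0) := by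
  refine tendsto_of_tendsto_of_tendsto_of_le_of_le' (tendsto_log_comp_add_sub_log (-1))
    tendsto_const_nhds ?_ ?_
  · filter_upwards [eventually_gt_atTop 1] with y hy
    linarith [sub_eq_add_neg y 1 ▸ log_sub_one_le_deriv_log_Gamma hy]
  · filter_upwards [eventually_gt_atTop 0] with y hy
    linarith [deriv_log_Gamma_le_log hy]

end Real

lemma Complex.deriv_Gamma_ofReal {x : ℝ} (hx : 0 < x) :
    deriv Complex.Gamma (x : ℂ) = ((deriv Real.Gamma x : ℝ) : ℂ) := by
  have hC := (differentiableAt_Gamma _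
    (ne_neg_natCast_of_re_pos (by simpa using hx : 0 < (x : ℂ).re))).hasDerivAt
  refine hC.comp_ofReal.unique ?_
  simpa only [Gamma_ofReal] using (Real.differentiableAt_Gamma_of_pos hx).hasDerivAt.ofReal_comp

lemma Complex.digamma_ofReal {x : ℝ} (hx : 0 < x) :
    Complex.digamma x = ((deriv (Real.log ∘ Real.Gamma) x : ℝ) : ℂ) := by
  rw [digamma_def, logDeriv_apply, Function.comp_def, deriv.log
    (Real.differentiableAt_Gamma_of_pos hx) (Real.Gamma_pos_of_pos hx).ne', deriv_Gamma_ofReal hx,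
    Gamma_ofReal, ofReal_div]

lemma tendsto_digammaRemainder_ofReal_add_nat {x : ℝ} (hx : 0 < x) :
    Tendsto (fun N : ℕ => digammaRemainder (x + N)) atTop (𝓝 0) := by
  have hreal : Tendsto
      (fun y : ℝ => Real.log y - 1 / (2 * y) - deriv (Real.log ∘ Real.Gamma) y) atTop (𝓝 0) := by
    have h := Real.tendsto_deriv_log_Gamma_sub_log.neg.sub
      (tendsto_const_nhds.div_atTop (tendsto_id.const_mul_atTop two_pos) : Tendsto
        (fun y : ℝ => 1 / (2 * y)) atTop (𝓝 0))
    rw [neg_zero, sub_zero] at h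
    exact h.congr fun y => by ring
  have hshift : Tendsto (fun N : ℕ => x + N) atTop atTop :=
    tendsto_atTop_add_const_left _ x tendsto_natCast_atTop_atTop
  refine ((continuous_ofReal.tendsto 0).comp (hreal.comp hshift)).congr fun N => ?_
  have hxN : 0 < x + N := by positivity
  have hψ := Complex.digamma_ofReal hxN
  push_cast at hψ
  simp [digammaRemainder, hψ, ofReal_log hxN.le]

lemma AnalyticOnNhd.eqOn_of_eq_ofReal {f g : ℂ → ℂ} (hf : AnalyticOnNhd ℂ f {z | 0 < z.re})
    (hg : AnalyticOnNhd ℂ g {z | 0 < z.re}) (h : ∀ x : ℝ, 0 < x → f x = g x) :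
    EqOn f g {z | 0 < z.re} := by
  refine hf.eqOn_of_preconnected_of_frequently_eq hg (convex_halfSpace_re_gt 0).isPreconnected
    (z₀ := 1) (by simp) ?_
  have hofReal : Tendsto ((↑) : ℝ → ℂ) (𝓝[≠] 1) (𝓝[≠] 1) :=
    tendsto_nhdsWithin_of_tendsto_nhds_of_eventually_within _
      (by simpa using (continuous_ofReal.tendsto (1 : ℝ)).mono_left nhdsWithin_le_nhds)
      (eventually_nhdsWithin_of_forall fun x hx => by simpa using hx)
  exact hofReal.frequently
    ((eventually_nhdsWithin_of_eventually_nhds (eventually_gt_nhds one_pos)).mono h).frequently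

lemma analyticOnNhd_digamma : AnalyticOnNhd ℂ Complex.digamma {z | 0 < z.re} := by
  have hΓ : AnalyticOnNhd ℂ Complex.Gamma {z | 0 < z.re} :=
    DifferentiableOn.analyticOnNhd (fun z hz =>
      (differentiableAt_Gamma z (ne_neg_natCast_of_re_pos hz)).differentiableWithinAt)
      (isOpen_lt continuous_const continuous_re)
  exact fun z hz => (hΓ.deriv z hz).div (hΓ z hz) (Gamma_ne_zero_of_re_pos hz)

lemma analyticOnNhd_digammaRemainder : AnalyticOnNhd ℂ digammaRemainder {z | 0 < z.re} := by
  intro z (hz : 0 < z.re)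
  have h0 : z ≠ 0 := by simpa using ne_neg_natCast_of_re_pos hz 0
  exact ((analyticAt_clog (mem_slitPlane_iff.mpr (Or.inl hz))).sub (analyticAt_const.div
    (analyticAt_const.mul analyticAt_id) (mul_ne_zero two_ne_zero h0))).sub
    (analyticOnNhd_digamma z hz)

lemma analyticOnNhd_integral_sawtooth_div_sq :
    AnalyticOnNhd ℂ (fun z : ℂ => ∫ t in Ioi (0 : ℝ), (sawtooth t : ℂ) / ((t : ℂ) + z) ^ 2)
      {z | 0 < z.re} :=
  DifferentiableOn.analyticOnNhd (fun _ hz =>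
    (hasDerivAt_integral_sawtooth_div_sq hz).differentiableAt.differentiableWithinAt)
    (isOpen_lt continuous_const continuous_re)

end

theorem digamma_integral_formula (z : ℂ) (hz : 0 < z.re) :
    _root_.digamma z = Complex.log z - 1 / (2 * z) -
      ∫ t in Set.Ioi (0 : ℝ),
        ((((⌊t⌋ : ℝ) - t + 1/2 : ℝ) : ℂ) / ((t : ℂ) + z) ^ 2) := by
  have hR : digammaRemainder z = ∫ t in Ioi (0 : ℝ), (sawtooth t : ℂ) / ((t : ℂ) + z) ^ 2 :=
    analyticOnNhd_digammaRemainder.eqOn_of_eq_ofReal analyticOnNhd_integral_sawtooth_div_sq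
      (fun x hx => (integral_sawtooth_div_sq_of_tendsto (by simpa using hx)
        (tendsto_digammaRemainder_ofReal_add_nat hx)).symm) hz
  rw [digammaRemainder] at hR
  unfold sawtooth at hR
  change Complex.digamma z = _
  rw [← hR]
  ring
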